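/- Let E0 > 0. Suppose (γ_n) is a sequence with γ_n > 0 and γ_n → 0, and for each n we have ω_n and μ_n > 0 with (ω_n − E0)(ω_n + 4) − γ_n² > 0 such that α(ω_n; γ_n, E0) = 1/3 and β(ω_n; γ_n, μ_n, E0) = 8/27 (equivalently, the cubic f has the double root P = 2/3 at frequency ω_n). Then γ_n⁴/μ_n → (3√3/16)·E0^{3/2}·(E0+4)² and (ω_n − E0)/γ_n² → (2√3 + √E0)/(√E0·(E0+4)) as n → ∞. -/

import Mathlib

open Filter

/-- `α(ω; γ, E0) = 4γ⁴/(ω σ² ρ²)` with `ρ = ω+4`, `σ = ω - E0 - γ²/ρ`. -/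
noncomputable def alphaPar (E0 γ ω : ℝ) : ℝ :=
  4 * γ^4 / (ω * (ω - E0 - γ^2 / (ω + 4))^2 * (ω + 4)^2)

/-- `β(ω; γ, μ, E0) = 4γ²μ/(σ³ ρ)`. -/
noncomputable def betaPar (E0 γ μ ω : ℝ) : ℝ :=
  4 * γ^2 * μ / ((ω - E0 - γ^2 / (ω + 4))^3 * (ω + 4))

/-
Writing σ = ω - E0 - γ²/(ω+4), the condition α = 1/3 says (√ω σ (ω+4))² = (2√3 γ²)², and both
bases are positive, so σ = 2√3 γ²/(√ω (ω+4)). Hence ω - E0 = σ + γ²/(ω+4) is γ² times an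
explicit function of ω, and β = 8/27 then gives γ⁴/μ = (3√3/16) ω^{3/2} (ω+4)². The first
identity bounds ω - E0 by a multiple of γ², so ω → E0, and both limits follow by continuity
at E0 > 0.
-/

open Real Topology

noncomputable def detuning (E0 γ ω : ℝ) : ℝ := ω - E0 - γ ^ 2 / (ω + 4)

section Omega12Point

variable {E0 γ μ ω : ℝ}

theorem alphaPar_eq : alphaPar E0 γ ω = 4 * γ ^ 4 / (ω * detuning E0 γ ω ^ 2 * (ω + 4) ^ 2) :=
  rfl

theorem betaPar_eq : betaPar E0 γ μ ω = 4 * γ ^ 2 * μ / (detuning E0 γ ω ^ 3 * (ω + 4)) :=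
  rfl

theorem sub_eq_detuning_add : ω - E0 = detuning E0 γ ω + γ ^ 2 / (ω + 4) := by
  unfold detuning; ring

theorem pos_of_alphaPar_eq_one_third (hα : alphaPar E0 γ ω = 1 / 3) : 0 < ω := by
  by_contra! hω
  have hden : ω * detuning E0 γ ω ^ 2 * (ω + 4) ^ 2 ≤ 0 :=
    mul_nonpos_of_nonpos_of_nonneg (mul_nonpos_of_nonpos_of_nonneg hω (sq_nonneg _)) (sq_nonneg _)
  have := div_nonpos_of_nonneg_of_nonpos (by positivity : (0 : ℝ) ≤ 4 * γ ^ 4) hden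
  rw [← alphaPar_eq, hα] at this
  norm_num at this

theorem detuning_pos (hω : 0 < ω) (hdom : 0 < (ω - E0) * (ω + 4) - γ ^ 2) :
    0 < detuning E0 γ ω := by
  have hρ : 0 < ω + 4 := by linarith
  refine pos_of_mul_pos_left (b := ω + 4) ?_ hρ.le
  rwa [detuning, sub_mul, div_mul_cancel₀ _ hρ.ne']

theorem lt_of_detuning_pos (hω : 0 < ω) (hσ : 0 < detuning E0 γ ω) : E0 < ω := by
  have := sub_eq_detuning_add (E0 := E0) (γ := γ) (ω := ω)
  have : 0 ≤ γ ^ 2 / (ω + 4) := by positivity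
  linarith

theorem sqrt_mul_detuning_mul_eq (hω : 0 < ω) (hσ : 0 < detuning E0 γ ω)
    (hα : alphaPar E0 γ ω = 1 / 3) : √ω * detuning E0 γ ω * (ω + 4) = 2 * √3 * γ ^ 2 := by
  rw [← pow_left_inj₀ (by positivity) (by positivity) two_ne_zero]
  rw [alphaPar_eq, div_eq_iff (by positivity)] at hα
  simp only [mul_pow, sq_sqrt hω.le, sq_sqrt (by norm_num : (0 : ℝ) ≤ 3)]
  linear_combination -3 * hα

theorem sub_eq_sq_mul (hω : 0 < ω) (hσ : 0 < detuning E0 γ ω) (hα : alphaPar E0 γ ω = 1 / 3) :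
    ω - E0 = γ ^ 2 * ((2 * √3 + √ω) / (√ω * (ω + 4))) := by
  have hkey := sqrt_mul_detuning_mul_eq hω hσ hα
  have hsqrt : 0 < √ω := sqrt_pos.mpr hω
  rw [sub_eq_detuning_add (γ := γ)]
  field_simp
  linear_combination hkey

theorem pow_four_div_eq (hω : 0 < ω) (hσ : 0 < detuning E0 γ ω) (hα : alphaPar E0 γ ω = 1 / 3)
    (hβ : betaPar E0 γ μ ω = 8 / 27) :
    γ ^ 4 / μ = 3 * √3 / 16 * √ω * ω * (ω + 4) ^ 2 := by
  have hkey := sqrt_mul_detuning_mul_eq hω hσ hα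
  have hγ : γ ≠ 0 := by
    have : 0 < 2 * √3 * γ ^ 2 := hkey ▸ by positivity
    rintro rfl
    simp at this
  rw [betaPar_eq, div_eq_iff (by positivity)] at hβ
  have hμ : μ = 2 * detuning E0 γ ω ^ 3 * (ω + 4) / (27 * γ ^ 2) := by
    field_simp; linear_combination 27 / 4 * hβ
  have hcube := congrArg (· ^ 3) hkey
  have h3 : √3 ^ 2 = 3 := sq_sqrt (by norm_num)
  have hω2 : √ω ^ 2 = ω := sq_sqrt hω.le
  rw [hμ]
  field_simp
  linear_combination (-6 * √3) * hcube + 6 * √3 * √ω * detuning E0 γ ω ^ 3 * (ω + 4) ^ 3 * hω2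
    - 48 * γ ^ 6 * (√3 ^ 2 + 3) * h3

end Omega12Point

theorem div_sqrt_mul_add_four_le {E0 ω : ℝ} (hE0 : 0 < E0) (hω : E0 ≤ ω) :
    (2 * √3 + √ω) / (√ω * (ω + 4)) ≤ (2 * √3 / √E0 + 1) / 4 := by
  have hsE0 : 0 < √E0 := sqrt_pos.mpr hE0
  have hsω : √E0 ≤ √ω := sqrt_le_sqrt hω
  have hω0 : 0 < ω := hE0.trans_le hω
  have hcoef : 2 * √3 ≤ 2 * √3 / √E0 * √ω := by
    rw [div_mul_eq_mul_div, le_div_iff₀ hsE0]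
    gcongr
  rw [div_le_iff₀ (by positivity)]
  calc 2 * √3 + √ω ≤ 2 * √3 / √E0 * √ω + √ω := by linarith
    _ ≤ (2 * √3 / √E0 * √ω + √ω) * ((ω + 4) / 4) :=
        le_mul_of_one_le_right (by positivity) (by rw [le_div_iff₀ four_pos]; linarith)
    _ = (2 * √3 / √E0 + 1) / 4 * (√ω * (ω + 4)) := by ring

theorem tendsto_of_sub_le_mul_sq {ι : Type*} {l : Filter ι} {u v : ι → ℝ} {a C : ℝ}
    (hv : Tendsto v l (𝓝 0)) (hle : ∀ i, a ≤ u i) (hsub : ∀ i, u i - a ≤ C * v i ^ 2) :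
    Tendsto u l (𝓝 a) := by
  have hupper : Tendsto (fun i => a + C * v i ^ 2) l (𝓝 a) := by
    simpa using tendsto_const_nhds.add (tendsto_const_nhds.mul (hv.pow 2))
  exact tendsto_of_tendsto_of_tendsto_of_le_of_le tendsto_const_nhds hupper hle
    fun i => by linarith [hsub i]

theorem omega12_bifurcation_asymptotics_general
    (E0 : ℝ) (hE0 : 0 < E0) (γ μ ω : ℕ → ℝ)
    (hγ0 : Tendsto γ atTop (nhds 0))
    (hdom : ∀ n, (ω n - E0) * (ω n + 4) - (γ n)^2 > 0)
    (hα : ∀ n, alphaPar E0 (γ n) (ω n) = 1/3)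
    (hβ : ∀ n, betaPar E0 (γ n) (μ n) (ω n) = 8/27) :
    Tendsto (fun n => (γ n)^4 / μ n) atTop
        (nhds ((3 * Real.sqrt 3 / 16) * E0 ^ ((3:ℝ)/2) * (E0 + 4)^2)) ∧
    Tendsto (fun n => (ω n - E0) / (γ n)^2) atTop
        (nhds ((2 * Real.sqrt 3 + Real.sqrt E0) / (Real.sqrt E0 * (E0 + 4)))) := by
  have hωpos n := pos_of_alphaPar_eq_one_third (hα n)
  have hσ n := detuning_pos (hωpos n) (hdom n)
  have hsub n := sub_eq_sq_mul (hωpos n) (hσ n) (hα n)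
  have hlt n := lt_of_detuning_pos (hωpos n) (hσ n)
  have hγsq n : γ n ^ 2 ≠ 0 := fun h => by
    have := hsub n
    rw [h, zero_mul] at this
    linarith [hlt n]
  have hω : Tendsto ω atTop (𝓝 E0) := by
    refine tendsto_of_sub_le_mul_sq (C := (2 * √3 / √E0 + 1) / 4) hγ0 (fun n => (hlt n).le)
      fun n => ?_
    rw [hsub, mul_comm]
    exact mul_le_mul_of_nonneg_right (div_sqrt_mul_add_four_le hE0 (hlt n).le) (sq_nonneg _)
  have hE0' : E0 ^ ((3 : ℝ) / 2) = √E0 * E0 := by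
    rw [show (3 : ℝ) / 2 = 1 / 2 + 1 by norm_num, rpow_add hE0, rpow_one, ← sqrt_eq_rpow]
  constructor
  · rw [hE0', ← mul_assoc]
    refine Tendsto.congr (fun n => (pow_four_div_eq (hωpos n) (hσ n) (hα n) (hβ n)).symm) ?_
    exact ((tendsto_const_nhds.mul hω.sqrt).mul hω).mul ((hω.add_const 4).pow 2)
  · refine Tendsto.congr (fun n => (by rw [hsub, mul_div_cancel_left₀ _ (hγsq n)])) ?_
    exact (tendsto_const_nhds.add hω.sqrt).div (hω.sqrt.mul (hω.add_const 4)) (by positivity)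

/-- asymptotics of the ω1-ω2 bifurcation (double root at `P = 2/3`,
i.e. `α = 1/3`, `β = 8/27`): the power law `γ⁴/μ → (3√3/16) E0^{3/2} (E0+4)²` and
the frequency asymptotics `(ω - E0)/γ² → (2√3 + √E0)/(√E0 (E0+4))`. -/
theorem omega12_bifurcation_asymptotics
    (E0 : ℝ) (hE0 : 0 < E0) (γ μ ω : ℕ → ℝ)
    (hγpos : ∀ n, 0 < γ n)
    (hγ0 : Tendsto γ atTop (nhds 0))
    (hμpos : ∀ n, 0 < μ n)
    (hdom : ∀ n, (ω n - E0) * (ω n + 4) - (γ n)^2 > 0)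
    (hα : ∀ n, alphaPar E0 (γ n) (ω n) = 1/3)
    (hβ : ∀ n, betaPar E0 (γ n) (μ n) (ω n) = 8/27) :
    Tendsto (fun n => (γ n)^4 / μ n) atTop
        (nhds ((3 * Real.sqrt 3 / 16) * E0 ^ ((3:ℝ)/2) * (E0 + 4)^2)) ∧
    Tendsto (fun n => (ω n - E0) / (γ n)^2) atTop
        (nhds ((2 * Real.sqrt 3 + Real.sqrt E0) / (Real.sqrt E0 * (E0 + 4)))) :=
  omega12_bifurcation_asymptotics_general E0 hE0 γ μ ω hγ0 hdom hα hβ
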